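/- Let p, q ≥ 0 with p+q ≥ 2, and let ℝ_G^{p+q+1} = {X ∈ ℝ^{p+q+1} : N(X) > 0}. Then the function H_{p,q}(X) = N(X)^{−(p+q−1)/2} satisfies □_{p,q} H_{p,q} = 0 on ℝ_G^{p+q+1}, and the 𝒜_{p,q}-valued function G_{p,q}(X) = N(X)^{−(p+q+1)/2} X⁺ equals (1−p−q)^{−1} ∇_{p,q}H_{p,q} and is both (p,q)-left-monogenic and (p,q)-right-monogenic on ℝ_G^{p+q+1}. -/

import Mathlib

open scoped BigOperators

/-- `N(X) = ∑_{j=0}^p x_j² - ∑_{j=p+1}^{p+q} x̃_j²` on `ℝ^{p+q+1}`. -/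
noncomputable def Npq (p q : ℕ) (X : Fin (p + q + 1) → ℝ) : ℝ :=
  ∑ j : Fin (p + q + 1), if (j : ℕ) ≤ p then X j ^ 2 else -(X j ^ 2)

/-- The domain `ℝ_G^{p+q+1} = {X : N(X) > 0}`. -/
def RG (p q : ℕ) : Set (Fin (p + q + 1) → ℝ) := {X | 0 < Npq p q X}

/-- The `j`-th partial derivative. -/
noncomputable def pdR {m : ℕ} {A : Type*} [NormedAddCommGroup A] [NormedSpace ℝ A]
    (f : (Fin m → ℝ) → A) (j : Fin m) (X : Fin m → ℝ) : A :=
  fderiv ℝ f X (Pi.single j 1)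

/-- Sign for `∇⁺_{p,q}` and `□_{p,q}`. -/
def sgnP (p : ℕ) {m : ℕ} (j : Fin m) : ℝ := if (j : ℕ) ≤ p then 1 else -1

/-- Sign for `∇_{p,q}`. -/
def sgnM (p : ℕ) {m : ℕ} (j : Fin m) : ℝ :=
  if (j : ℕ) = 0 then 1 else if (j : ℕ) ≤ p then -1 else 1

/-- The left Dirac operator `∇⁺_{p,q} f`. -/
noncomputable def diracPlusL (p q : ℕ) {A : Type*} [NormedRing A] [NormedAlgebra ℝ A]
    (e : Fin (p + q + 1) → A) (f : (Fin (p + q + 1) → ℝ) → A)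
    (X : Fin (p + q + 1) → ℝ) : A :=
  ∑ j, sgnP p j • (e j * pdR f j X)

/-- The left Dirac operator `∇_{p,q} f`. -/
noncomputable def diracMinusL (p q : ℕ) {A : Type*} [NormedRing A] [NormedAlgebra ℝ A]
    (e : Fin (p + q + 1) → A) (f : (Fin (p + q + 1) → ℝ) → A)
    (X : Fin (p + q + 1) → ℝ) : A :=
  ∑ j, sgnM p j • (e j * pdR f j X)

/-- The right Dirac operator `f ∇⁺_{p,q}`. -/
noncomputable def diracPlusR (p q : ℕ) {A : Type*} [NormedRing A] [NormedAlgebra ℝ A]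
    (e : Fin (p + q + 1) → A) (f : (Fin (p + q + 1) → ℝ) → A)
    (X : Fin (p + q + 1) → ℝ) : A :=
  ∑ j, sgnP p j • (pdR f j X * e j)

/-- The wave operator `□_{p,q}`. -/
noncomputable def waveOp (p q : ℕ) {A : Type*} [NormedAddCommGroup A] [NormedSpace ℝ A]
    (f : (Fin (p + q + 1) → ℝ) → A) (X : Fin (p + q + 1) → ℝ) : A :=
  ∑ j, sgnP p j • pdR (pdR f j) j X

/-- `X⁺ = x_0 e_0 - ∑_{j=1}^p x_j e_j - ∑ x̃_j ẽ_j`. -/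
noncomputable def XplusR {m : ℕ} {A : Type*} [NormedRing A] [NormedAlgebra ℝ A]
    (e : Fin m → A) (X : Fin m → ℝ) : A :=
  ∑ j : Fin m, (if (j : ℕ) = 0 then X j else -X j) • e j

/-- `H_{p,q}(X) = N(X)^{-(p+q-1)/2}` on `ℝ_G^{p+q+1}` (real power). -/
noncomputable def Hpq (p q : ℕ) (X : Fin (p + q + 1) → ℝ) : ℝ :=
  Real.rpow (Npq p q X) (-(((p : ℝ) + (q : ℝ) - 1) / 2))

/-- `G_{p,q}(X) = N(X)^{-(p+q+1)/2} X⁺`. -/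
noncomputable def Gpq (p q : ℕ) {A : Type*} [NormedRing A] [NormedAlgebra ℝ A]
    (e : Fin (p + q + 1) → A) (X : Fin (p + q + 1) → ℝ) : A :=
  Real.rpow (Npq p q X) (-(((p : ℝ) + (q : ℝ) + 1) / 2)) • XplusR e X

/-!
With `N = ∑ sgnP j * X j ^ 2` one has `∂ⱼ N = 2 sgnP j X j`, so the partial derivatives of
`N ^ c` are explicit and `□ (N ^ c) = 2c (p + q + 1 + 2(c - 1)) N ^ (c - 1)`, which vanishes at
`c = -(p + q - 1)/2`; moreover `∇ (N ^ c) = 2c N ^ (c - 1) X⁺`, which gives `G = (1 - p - q)⁻¹ ∇ H`.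
For monogenicity, the Clifford relations make `X X⁺ = X⁺ X = N` (the mixed terms cancel in pairs)
and `sgnP j • (e j)⁺ e j = 1`, so that `∇⁺ (N ^ d X⁺) = (p + q + 1 + 2d) N ^ d`, which vanishes at
`d = -(p + q + 1)/2`; the same computation works on the right.
-/

open Topology

section PartialDerivative

variable {m : ℕ} {E : Type*} [NormedAddCommGroup E] [NormedSpace ℝ E] {X : Fin m → ℝ}
  {j : Fin m}

lemma pdR_smul_const {f : (Fin m → ℝ) → ℝ} (hf : DifferentiableAt ℝ f X) (u : E) :
    pdR (fun Y => f Y • u) j X = pdR f j X • u := by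
  simp [pdR, fderiv_smul_const hf]

lemma pdR_smul {φ : (Fin m → ℝ) → ℝ} {F : (Fin m → ℝ) → E} (hφ : DifferentiableAt ℝ φ X)
    (hF : DifferentiableAt ℝ F X) :
    pdR (fun Y => φ Y • F Y) j X = φ X • pdR F j X + pdR φ j X • F X := by
  simp [pdR, fderiv_fun_smul hφ hF]

lemma pdR_mul {φ ψ : (Fin m → ℝ) → ℝ} (hφ : DifferentiableAt ℝ φ X)
    (hψ : DifferentiableAt ℝ ψ X) :
    pdR (fun Y => φ Y * ψ Y) j X = φ X * pdR ψ j X + pdR φ j X * ψ X :=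
  pdR_smul hφ hψ

lemma pdR_rpow_const {f : (Fin m → ℝ) → ℝ} (hf : DifferentiableAt ℝ f X) (hX : f X ≠ 0)
    (c : ℝ) : pdR (fun Y => f Y ^ c) j X = c * f X ^ (c - 1) * pdR f j X := by
  simp [pdR, (hf.hasFDerivAt.rpow_const (Or.inl hX)).fderiv, mul_assoc]

lemma pdR_apply_self : pdR (fun Y : Fin m → ℝ => Y j) j X = 1 := by
  simp [pdR, (hasFDerivAt_apply j X).fderiv]

end PartialDerivative

/-- The sign of `e j` in `X⁺`, so that `(e j)⁺ = conjSign j • e j`. -/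
def conjSign {m : ℕ} (j : Fin m) : ℝ := if (j : ℕ) = 0 then 1 else -1

lemma sgnP_mul_self (p : ℕ) {m : ℕ} (j : Fin m) : sgnP p j * sgnP p j = 1 := by
  unfold sgnP; split_ifs <;> norm_num

lemma sgnM_mul_sgnP (p : ℕ) {m : ℕ} (j : Fin m) : sgnM p j * sgnP p j = conjSign j := by
  unfold sgnM sgnP conjSign; split_ifs <;> first | omega | norm_num

section XplusR

variable {m : ℕ} {A : Type*} [NormedRing A] [NormedAlgebra ℝ A] (e : Fin m → A)

lemma XplusR_eq_sum (X : Fin m → ℝ) : XplusR e X = ∑ j, (conjSign j * X j) • e j := by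
  unfold XplusR conjSign
  refine Finset.sum_congr rfl fun j _ => ?_
  split_ifs <;> simp

lemma XplusR_eq_fun : XplusR e = fun X => ∑ j, (conjSign j * X j) • e j :=
  funext (XplusR_eq_sum e)

lemma differentiable_XplusR : Differentiable ℝ (XplusR e) := by
  rw [XplusR_eq_fun]
  fun_prop

lemma pdR_XplusR (j : Fin m) (X : Fin m → ℝ) : pdR (XplusR e) j X = conjSign j • e j := by
  have hterm : ∀ k ∈ Finset.univ, HasFDerivAt (fun Y : Fin m → ℝ => (conjSign k * Y k) • e k)
      ((conjSign k • ContinuousLinearMap.proj (R := ℝ) k).smulRight (e k)) X :=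
    fun k _ => ((hasFDerivAt_apply k X).const_mul _).smul_const _
  simp [pdR, XplusR_eq_fun, (HasFDerivAt.fun_sum hterm).fderiv, Pi.single_apply]

end XplusR

section QuadraticForm

variable {p q : ℕ} {X : Fin (p + q + 1) → ℝ}

lemma Npq_eq_sum (p q : ℕ) (X : Fin (p + q + 1) → ℝ) :
    Npq p q X = ∑ j, sgnP p j * X j ^ 2 := by
  unfold Npq sgnP
  exact Finset.sum_congr rfl fun j _ => by split_ifs <;> ring

lemma Npq_eq_fun (p q : ℕ) : Npq p q = fun X => ∑ j, sgnP p j * X j ^ 2 :=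
  funext (Npq_eq_sum p q)

lemma differentiable_Npq (p q : ℕ) : Differentiable ℝ (Npq p q) := by
  rw [Npq_eq_fun]
  fun_prop

lemma pdR_Npq (j : Fin (p + q + 1)) : pdR (Npq p q) j X = 2 * sgnP p j * X j := by
  have hterm : ∀ k ∈ Finset.univ, HasFDerivAt (fun Y : Fin (p + q + 1) → ℝ => sgnP p k * Y k ^ 2)
      (sgnP p k • (2 • X k ^ (2 - 1)) • ContinuousLinearMap.proj (R := ℝ) k) X :=
    fun k _ => ((hasFDerivAt_apply k X).pow 2).const_mul _
  rw [pdR, Npq_eq_fun, (HasFDerivAt.fun_sum hterm).fderiv]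
  simp [Pi.single_apply]
  ring

lemma pdR_rpow_Npq (hX : Npq p q X ≠ 0) (c : ℝ) (j : Fin (p + q + 1)) :
    pdR (fun Y => Npq p q Y ^ c) j X = 2 * c * sgnP p j * X j * Npq p q X ^ (c - 1) := by
  rw [pdR_rpow_const (differentiable_Npq p q X) hX, pdR_Npq]
  ring

lemma isOpen_setOf_Npq_ne_zero (p q : ℕ) : IsOpen {X | Npq p q X ≠ 0} :=
  isOpen_ne_fun (differentiable_Npq p q).continuous continuous_const

end QuadraticForm

section PowerOfNpq

variable {p q : ℕ} {E : Type*} [NormedAddCommGroup E] [NormedSpace ℝ E]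
  {X : Fin (p + q + 1) → ℝ}

lemma pdR_rpow_Npq_smul (hX : Npq p q X ≠ 0) (c : ℝ) (u : E) (j : Fin (p + q + 1)) :
    pdR (fun Y => Npq p q Y ^ c • u) j X = (2 * c * sgnP p j * X j * Npq p q X ^ (c - 1)) • u := by
  rw [pdR_smul_const ((differentiable_Npq p q X).rpow_const (Or.inl hX)), pdR_rpow_Npq hX]

lemma pdR_pdR_rpow_Npq_smul (hX : Npq p q X ≠ 0) (c : ℝ) (u : E) (j : Fin (p + q + 1)) :
    pdR (pdR (fun Y => Npq p q Y ^ c • u) j) j X =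
      (2 * c * sgnP p j * (Npq p q X ^ (c - 1) +
        2 * (c - 1) * sgnP p j * X j ^ 2 * Npq p q X ^ (c - 1 - 1))) • u := by
  have hpdR : pdR (fun Y => Npq p q Y ^ c • u) j =ᶠ[𝓝 X]
      fun Y => (Y j * Npq p q Y ^ (c - 1)) • (2 * c * sgnP p j) • u := by
    filter_upwards [(isOpen_setOf_Npq_ne_zero p q).mem_nhds hX] with Y hY
    rw [pdR_rpow_Npq_smul hY, smul_smul]
    ring_nf
  have hpow : DifferentiableAt ℝ (fun Y => Npq p q Y ^ (c - 1)) X :=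
    (differentiable_Npq p q X).rpow_const (Or.inl hX)
  have happly : DifferentiableAt ℝ (fun Y : Fin (p + q + 1) → ℝ => Y j) X := by fun_prop
  have hprod : DifferentiableAt ℝ (fun Y => Y j * Npq p q Y ^ (c - 1)) X := happly.mul hpow
  rw [pdR, hpdR.fderiv_eq, ← pdR, pdR_smul_const hprod, pdR_mul happly hpow,
    pdR_apply_self, pdR_rpow_Npq hX, smul_smul]
  ring_nf

lemma waveOp_rpow_Npq_smul (hX : Npq p q X ≠ 0) (c : ℝ) (u : E) :
    waveOp p q (fun Y => Npq p q Y ^ c • u) X =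
      (2 * c * (p + q + 1 + 2 * (c - 1)) * Npq p q X ^ (c - 1)) • u := by
  have hterm : ∀ j : Fin (p + q + 1), sgnP p j * (2 * c * sgnP p j * (Npq p q X ^ (c - 1) +
      2 * (c - 1) * sgnP p j * X j ^ 2 * Npq p q X ^ (c - 1 - 1))) =
        2 * c * Npq p q X ^ (c - 1) +
          4 * c * (c - 1) * Npq p q X ^ (c - 1 - 1) * (sgnP p j * X j ^ 2) := by
    intro j
    linear_combination (2 * c * (Npq p q X ^ (c - 1) + 2 * (c - 1) * sgnP p j * X j ^ 2 *
      Npq p q X ^ (c - 1 - 1))) * sgnP_mul_self p j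
  simp only [waveOp, pdR_pdR_rpow_Npq_smul hX, smul_smul, hterm, ← Finset.sum_smul]
  rw [Finset.sum_add_distrib, Finset.sum_const, ← Finset.mul_sum, ← Npq_eq_sum,
    Finset.card_univ, Fintype.card_fin, Real.rpow_sub_one hX (c - 1)]
  congr 1
  field_simp
  ring

lemma diracMinusL_rpow_Npq_smul_one {A : Type*} [NormedRing A] [NormedAlgebra ℝ A]
    (e : Fin (p + q + 1) → A) (hX : Npq p q X ≠ 0) (c : ℝ) :
    diracMinusL p q e (fun Y => Npq p q Y ^ c • (1 : A)) X =
      (2 * c * Npq p q X ^ (c - 1)) • XplusR e X := by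
  rw [diracMinusL, XplusR_eq_sum, Finset.smul_sum]
  refine Finset.sum_congr rfl fun j _ => ?_
  rw [pdR_rpow_Npq_smul hX, mul_smul_comm, mul_one, smul_smul, smul_smul, ← sgnM_mul_sgnP p j]
  ring_nf

lemma pdR_rpow_Npq_smul_XplusR {A : Type*} [NormedRing A] [NormedAlgebra ℝ A]
    (e : Fin (p + q + 1) → A) (hX : Npq p q X ≠ 0) (d : ℝ) (j : Fin (p + q + 1)) :
    pdR (fun Y => Npq p q Y ^ d • XplusR e Y) j X =
      Npq p q X ^ d • conjSign j • e j +
        (2 * d * sgnP p j * X j * Npq p q X ^ (d - 1)) • XplusR e X := by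
  rw [pdR_smul ((differentiable_Npq p q X).rpow_const (Or.inl hX)) (differentiable_XplusR e X),
    pdR_XplusR, pdR_rpow_Npq hX]

end PowerOfNpq

lemma sum_sum_eq_sum_diag_of_add_swap_eq_zero {ι M : Type*} [Fintype ι] [AddCommMonoid M]
    (f : ι → ι → M) (h : ∀ j k, j ≠ k → f j k + f k j = 0) :
    ∑ j, ∑ k, f j k = ∑ j, f j j := by
  classical
  have hoffDiag : ∑ x ∈ (Finset.univ : Finset ι).offDiag, f x.1 x.2 = 0 :=
    Finset.sum_involution (fun x _ => x.swap) (fun x hx => h _ _ (Finset.mem_offDiag.1 hx).2.2)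
      (fun x hx _ hswap => (Finset.mem_offDiag.1 hx).2.2 (congrArg Prod.snd hswap))
      (fun x hx => by
        obtain ⟨hx₁, hx₂, hne⟩ := Finset.mem_offDiag.1 hx
        exact Finset.mem_offDiag.2 ⟨hx₂, hx₁, hne.symm⟩) (fun _ _ => rfl)
  rw [← Finset.sum_product', ← Finset.diag_union_offDiag,
    Finset.sum_union (Finset.disjoint_diag_offDiag _), Finset.sum_diag, hoffDiag, add_zero]

/-- The relations between the generators `e₀ = 1, e₁, …, e_p, ẽ_{p+1}, …, ẽ_{p+q}` of `𝒜_{p,q}`. -/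
structure IsCliffordFrame {A : Type*} [Ring A] (p q : ℕ) (e : Fin (p + q + 1) → A) : Prop where
  zero : e 0 = 1
  mul_self_of_le : ∀ j : Fin (p + q + 1), 1 ≤ (j : ℕ) → (j : ℕ) ≤ p → e j * e j = -1
  mul_self_of_lt : ∀ j : Fin (p + q + 1), p < (j : ℕ) → e j * e j = 1
  anticomm : ∀ j k : Fin (p + q + 1), j ≠ 0 → k ≠ 0 → j ≠ k → e j * e k = -(e k * e j)

namespace IsCliffordFrame

variable {p q : ℕ} {A : Type*} [NormedRing A] [NormedAlgebra ℝ A] {e : Fin (p + q + 1) → A}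

lemma sgnP_mul_conjSign_smul_mul_self (he : IsCliffordFrame p q e) (j : Fin (p + q + 1)) :
    (sgnP p j * conjSign j) • (e j * e j) = 1 := by
  unfold sgnP conjSign
  by_cases hj : j = 0
  · subst hj
    simp [he.zero]
  · have hj' : (j : ℕ) ≠ 0 := Fin.val_ne_zero_iff.2 hj
    split_ifs with hjp
    · simp [he.mul_self_of_le j (Nat.one_le_iff_ne_zero.2 hj') hjp]
    · simp [he.mul_self_of_lt j (not_le.1 hjp)]

lemma mul_conj_add_mul_conj (he : IsCliffordFrame p q e) {j k : Fin (p + q + 1)} (hjk : j ≠ k) :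
    conjSign k • (e j * e k) + conjSign j • (e k * e j) = 0 := by
  unfold conjSign
  by_cases hj : j = 0
  · subst hj
    simp [he.zero, Fin.val_ne_zero_iff.2 hjk.symm]
  by_cases hk : k = 0
  · subst hk
    simp [he.zero, Fin.val_ne_zero_iff.2 hj]
  simp [Fin.val_ne_zero_iff.2 hj, Fin.val_ne_zero_iff.2 hk, he.anticomm j k hj hk hjk]

lemma conj_mul_add_conj_mul (he : IsCliffordFrame p q e) {j k : Fin (p + q + 1)} (hjk : j ≠ k) :
    conjSign j • (e j * e k) + conjSign k • (e k * e j) = 0 := by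
  unfold conjSign
  by_cases hj : j = 0
  · subst hj
    simp [he.zero, Fin.val_ne_zero_iff.2 hjk.symm]
  by_cases hk : k = 0
  · subst hk
    simp [he.zero, Fin.val_ne_zero_iff.2 hj]
  simp [Fin.val_ne_zero_iff.2 hj, Fin.val_ne_zero_iff.2 hk, he.anticomm j k hj hk hjk]

lemma mul_self_smul_conjSign_smul_mul_self (he : IsCliffordFrame p q e)
    (X : Fin (p + q + 1) → ℝ) (j : Fin (p + q + 1)) :
    (X j * X j) • conjSign j • (e j * e j) = (sgnP p j * X j ^ 2) • (1 : A) := by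
  rw [← he.sgnP_mul_conjSign_smul_mul_self j, smul_smul, smul_smul]
  congr 1
  linear_combination (-(X j ^ 2 * conjSign j)) * sgnP_mul_self p j

lemma sum_smul_mul_XplusR (he : IsCliffordFrame p q e) (X : Fin (p + q + 1) → ℝ) :
    (∑ j, X j • e j) * XplusR e X = Npq p q X • (1 : A) := by
  have hterm : ∀ j k, X j • e j * (conjSign k * X k) • e k =
      (X j * X k) • conjSign k • (e j * e k) := fun j k => by
    rw [smul_mul_smul_comm, smul_smul]
    ring_nf
  simp_rw [XplusR_eq_sum, Finset.sum_mul_sum, hterm]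
  rw [sum_sum_eq_sum_diag_of_add_swap_eq_zero _ fun j k hjk => by
      rw [mul_comm (X k), ← smul_add, he.mul_conj_add_mul_conj hjk, smul_zero],
    Npq_eq_sum, Finset.sum_smul]
  exact Finset.sum_congr rfl fun j _ => he.mul_self_smul_conjSign_smul_mul_self X j

lemma XplusR_mul_sum_smul (he : IsCliffordFrame p q e) (X : Fin (p + q + 1) → ℝ) :
    XplusR e X * (∑ j, X j • e j) = Npq p q X • (1 : A) := by
  have hterm : ∀ j k, (conjSign j * X j) • e j * X k • e k =
      (X j * X k) • conjSign j • (e j * e k) := fun j k => by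
    rw [smul_mul_smul_comm, smul_smul]
    ring_nf
  simp_rw [XplusR_eq_sum, Finset.sum_mul_sum, hterm]
  rw [sum_sum_eq_sum_diag_of_add_swap_eq_zero _ fun j k hjk => by
      rw [mul_comm (X k), ← smul_add, he.conj_mul_add_conj_mul hjk, smul_zero],
    Npq_eq_sum, Finset.sum_smul]
  exact Finset.sum_congr rfl fun j _ => he.mul_self_smul_conjSign_smul_mul_self X j

lemma diracPlusL_rpow_Npq_smul_XplusR (he : IsCliffordFrame p q e) {X : Fin (p + q + 1) → ℝ}
    (hX : Npq p q X ≠ 0) (d : ℝ) :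
    diracPlusL p q e (fun Y => Npq p q Y ^ d • XplusR e Y) X =
      ((p + q + 1 + 2 * d) * Npq p q X ^ d) • (1 : A) := by
  have hterm : ∀ j, sgnP p j • (e j * pdR (fun Y => Npq p q Y ^ d • XplusR e Y) j X) =
      Npq p q X ^ d • (1 : A) + (2 * d * Npq p q X ^ (d - 1)) • (X j • e j * XplusR e X) := by
    intro j
    rw [pdR_rpow_Npq_smul_XplusR e hX, ← he.sgnP_mul_conjSign_smul_mul_self j]
    simp only [mul_add, mul_smul_comm, smul_mul_assoc, smul_add, smul_smul]
    congr 1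
    · ring_nf
    · congr 1
      linear_combination (2 * d * X j * Npq p q X ^ (d - 1)) * sgnP_mul_self p j
  rw [diracPlusL, Finset.sum_congr rfl fun j _ => hterm j, Finset.sum_add_distrib,
    Finset.sum_const, ← Finset.smul_sum, ← Finset.sum_mul, he.sum_smul_mul_XplusR,
    Finset.card_univ, Fintype.card_fin, smul_smul, ← Nat.cast_smul_eq_nsmul ℝ, smul_smul,
    ← add_smul, Real.rpow_sub_one hX]
  congr 1
  field_simp
  push_cast
  ring

lemma diracPlusR_rpow_Npq_smul_XplusR (he : IsCliffordFrame p q e) {X : Fin (p + q + 1) → ℝ}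
    (hX : Npq p q X ≠ 0) (d : ℝ) :
    diracPlusR p q e (fun Y => Npq p q Y ^ d • XplusR e Y) X =
      ((p + q + 1 + 2 * d) * Npq p q X ^ d) • (1 : A) := by
  have hterm : ∀ j, sgnP p j • (pdR (fun Y => Npq p q Y ^ d • XplusR e Y) j X * e j) =
      Npq p q X ^ d • (1 : A) + (2 * d * Npq p q X ^ (d - 1)) • (XplusR e X * X j • e j) := by
    intro j
    rw [pdR_rpow_Npq_smul_XplusR e hX, ← he.sgnP_mul_conjSign_smul_mul_self j]
    simp only [add_mul, mul_smul_comm, smul_mul_assoc, smul_add, smul_smul]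
    congr 1
    · ring_nf
    · congr 1
      linear_combination (2 * d * X j * Npq p q X ^ (d - 1)) * sgnP_mul_self p j
  rw [diracPlusR, Finset.sum_congr rfl fun j _ => hterm j, Finset.sum_add_distrib,
    Finset.sum_const, ← Finset.smul_sum, ← Finset.mul_sum, he.XplusR_mul_sum_smul,
    Finset.card_univ, Fintype.card_fin, smul_smul, ← Nat.cast_smul_eq_nsmul ℝ, smul_smul,
    ← add_smul, Real.rpow_sub_one hX]
  congr 1
  field_simp
  push_cast
  ring

end IsCliffordFrame

/-- on `ℝ_G^{p+q+1}` (where `N(X) > 0`), `H_{p,q}` satisfies the wave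
equation `□_{p,q} H_{p,q} = 0`, and `G_{p,q} = (1-p-q)⁻¹ ∇_{p,q} H_{p,q}` is both
`(p,q)`-left-monogenic and `(p,q)`-right-monogenic. -/
theorem Hpq_wave_and_Gpq_monogenic {A : Type*} [NormedRing A] [NormedAlgebra ℝ A]
    (p q : ℕ) (hpq : 2 ≤ p + q)
    (e : Fin (p + q + 1) → A) (he0 : e 0 = 1)
    (hsqNeg : ∀ j : Fin (p + q + 1), 1 ≤ (j : ℕ) → (j : ℕ) ≤ p → e j * e j = -1)
    (hsqPos : ∀ j : Fin (p + q + 1), p < (j : ℕ) → e j * e j = 1)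
    (hanti : ∀ j k : Fin (p + q + 1), j ≠ 0 → k ≠ 0 → j ≠ k → e j * e k = -(e k * e j)) :
    ∀ X ∈ RG p q,
      waveOp p q (fun Y => Hpq p q Y • (1 : A)) X = 0 ∧
      Gpq p q e X =
        (1 - (p : ℝ) - (q : ℝ))⁻¹ • diracMinusL p q e (fun Y => Hpq p q Y • (1 : A)) X ∧
      diracPlusL p q e (Gpq p q e) X = 0 ∧
      diracPlusR p q e (Gpq p q e) X = 0 := by
  intro X hX
  have hN : Npq p q X ≠ 0 := ne_of_gt hX
  have he : IsCliffordFrame p q e := ⟨he0, hsqNeg, hsqPos, hanti⟩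
  have hpq' : (1 : ℝ) - p - q ≠ 0 := by
    have : (2 : ℝ) ≤ p + q := by exact_mod_cast hpq
    linarith
  have hH : (fun Y => Hpq p q Y • (1 : A)) =
      fun Y => Npq p q Y ^ (-(((p : ℝ) + q - 1) / 2)) • (1 : A) := rfl
  have hG : Gpq p q e = fun Y => Npq p q Y ^ (-(((p : ℝ) + q + 1) / 2)) • XplusR e Y := rfl
  rw [hH, hG, waveOp_rpow_Npq_smul hN, diracMinusL_rpow_Npq_smul_one e hN,
    he.diracPlusL_rpow_Npq_smul_XplusR hN, he.diracPlusR_rpow_Npq_smul_XplusR hN, smul_smul]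
  refine ⟨?_, ?_, ?_, ?_⟩
  · convert zero_smul ℝ (1 : A) using 2
    ring
  · beta_reduce
    rw [show -(((p : ℝ) + q - 1) / 2) - 1 = -(((p : ℝ) + q + 1) / 2) by ring]
    congr 1
    field_simp
    ring
  · convert zero_smul ℝ (1 : A) using 2
    ring
  · convert zero_smul ℝ (1 : A) using 2
    ring
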